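/- arXiv:1611.03431 — 3 statements merged into one kernel-verified Lean document; each statement's English description precedes it below -/
import Mathlib

section
/- Let R be a Noetherian local ring, x_1,...,x_{d-1},x_d elements of the maximal ideal such that x_1,...,x_{d-1} is a regular sequence. Suppose that for every l ≥ 1 one has ((x_1^l,...,x_{d-1}^l) : x_d^l) ∩ Q^{l(d-1)} ⊆ (x_1^l,...,x_{d-1}^l), where Q = (x_1,...,x_d). Then for every l ≥ 1, ((x_1^l,...,x_{d-1}^l) : x_d^{(d-1)l}) ∩ (x_1^l,...,x_{d-1}^l,x_d^{(d-1)l}) = (x_1^l,...,x_{d-1}^l). -/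
set_option maxHeartbeats 1000000
set_option synthInstance.maxHeartbeats 1000000

open IsLocalRing Polynomial

/-- The length of the `R`-module `M` (possibly infinite), as the Krull dimension of its
lattice of submodules. -/
noncomputable def moduleLength (R M : Type*) [CommRing R] [AddCommGroup M] [Module R M] :
    WithBot ℕ∞ :=
  Order.krullDim (Submodule R M)

/-- The depth of the module `M` with respect to the ideal `J` is at least `k`:
there is a regular sequence on `M` of length `k` consisting of elements of `J`. -/
def depthGE (R : Type*) [CommRing R] (J : Ideal R)
    (M : Type*) [AddCommGroup M] [Module R M] (k : ℕ) : Prop :=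
  ∃ rs : List R, rs.length = k ∧ (∀ r ∈ rs, r ∈ J) ∧ RingTheory.Sequence.IsRegular M rs

/-- If `y 0, …, y (d-2)` is a regular sequence in `m`, `z ∈ m`, `Q = (y 0, …, y (d-2), z)`,
and for every `l ≥ 1` one has `((y₀ˡ, …) : zˡ) ∩ Q^{l(d-1)} ⊆ (y₀ˡ, …)`, then for every
`l ≥ 1`, `((y₀ˡ, …) : z^{(d-1)l}) ∩ (y₀ˡ, …, z^{(d-1)l}) = (y₀ˡ, …)`. -/
theorem stmt3 {R : Type u} [CommRing R] [IsLocalRing R] [IsNoetherianRing R]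
    (d : ℕ) (hd : 1 ≤ d) (y : Fin (d - 1) → R) (z : R)
    (hy : ∀ i, y i ∈ maximalIdeal R) (hz : z ∈ maximalIdeal R)
    (hreg : RingTheory.Sequence.IsRegular R (List.ofFn y))
    (Q : Ideal R) (hQ : Q = Ideal.span (Set.range y ∪ {z}))
    (H : ∀ l : ℕ, 1 ≤ l →
      (Ideal.span (Set.range fun i => y i ^ l)).colon (Ideal.span {z ^ l}) ⊓ Q ^ (l * (d - 1))
        ≤ Ideal.span (Set.range fun i => y i ^ l)) :
    ∀ l : ℕ, 1 ≤ l →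
      (Ideal.span (Set.range fun i => y i ^ l)).colon (Ideal.span {z ^ ((d - 1) * l)}) ⊓
          (Ideal.span (Set.range fun i => y i ^ l) ⊔ Ideal.span {z ^ ((d - 1) * l)})
        = Ideal.span (Set.range fun i => y i ^ l) := by

  intro l hl
  set J : Ideal R := Ideal.span (Set.range fun i => y i ^ l) with hJ
  set n : ℕ := (d - 1) * l with hn
  have hzQ : z ∈ Q := by
    rw [hQ]; exact Ideal.subset_span (Or.inr rfl)
  -- key lemma
  have key : ∀ k : ℕ, ∀ s : R, s * z ^ (n + k * l) ∈ J → s * z ^ n ∈ J := by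
    intro k
    induction k with
    | zero => intro s hs; simpa using hs
    | succ k ih =>
      intro s hs
      apply ih
      apply H l hl
      constructor
      · rw [SetLike.mem_coe, Ideal.mem_colon_span_singleton, mul_assoc, ← pow_add]
        have : n + k * l + l = n + (k + 1) * l := by ring
        rw [this]; exact hs
      · have h1 : z ^ (l * (d - 1)) ∈ Q ^ (l * (d - 1)) := Ideal.pow_mem_pow hzQ _
        have h2 : n + k * l = (k * l) + l * (d - 1) := by rw [hn]; ring
        rw [h2, pow_add]
        exact Ideal.mul_mem_left _ _ (Ideal.mul_mem_left _ _ h1)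
  apply le_antisymm
  · rintro r ⟨h1, h2⟩
    simp only [SetLike.mem_coe] at h1 h2
    rw [Submodule.mem_sup] at h2
    obtain ⟨a, ha, b, hb, hab⟩ := h2
    rw [Ideal.mem_span_singleton'] at hb
    obtain ⟨s, hsb⟩ := hb
    have hrz : r * z ^ n ∈ J := by
      rw [← Ideal.mem_colon_span_singleton]; exact h1
    have hszz : s * z ^ (n + (d - 1) * l) ∈ J := by
      have : s * z ^ (n + (d - 1) * l) = r * z ^ n - a * z ^ n := by
        rw [← hab, ← hsb, ← hn, pow_add]; ring
      rw [this]
      exact Ideal.sub_mem _ hrz (Ideal.mul_mem_right _ _ ha)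
    have hsz : s * z ^ n ∈ J := key (d - 1) s hszz
    rw [← hab, ← hsb]
    exact Ideal.add_mem _ ha hsz
  · refine le_inf ?_ le_sup_left
    intro r hr
    rw [Ideal.mem_colon_span_singleton]
    exact Ideal.mul_mem_right _ _ hr
end

section
/- Let R be a Noetherian local ring and x_1,...,x_{d-1} a regular sequence in the maximal ideal, and let 1 ≤ l ≤ N be integers. If y ∈ R satisfies x_1^{N-l}·x_2^{N-l}···x_{d-1}^{N-l}·y ∈ (x_1^N,...,x_{d-1}^N), then y ∈ (x_1^l,...,x_{d-1}^l). -/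
set_option maxHeartbeats 1000000
set_option synthInstance.maxHeartbeats 1000000

open IsLocalRing Polynomial

/-! Convert the generators from exponent `N` to exponent `l` one at a time. If `r` is the next
one and `J` is generated by the others (those already converted with exponent `l`, the rest
with `N`), then `r ^ (N - l) * y ∈ (r ^ N) + J` forces `y ∈ (r ^ l) + J`, since `r ^ (N - l)` is a
nonzerodivisor on `R ⧸ J`: in a Noetherian local ring a regular sequence in the maximal ideal
stays regular after permuting it and after raising its members to positive powers. -/

section

open RingTheory.Sequence

variable {R : Type*} [CommRing R]

theorem IsLocalRing.isWeaklyRegular_cons_pow [IsLocalRing R]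
    {M : Type*} [AddCommGroup M] [Module R M] [IsNoetherian R M] {r : R} {rs : List R}
    (hm : ∀ a ∈ r :: rs, a ∈ maximalIdeal R) (h : IsWeaklyRegular M (r :: rs))
    {n : ℕ} (hn : 0 < n) : IsWeaklyRegular M (r ^ n :: rs) := by
  -- at the end of the sequence, `r` may be replaced by `r ^ n` by `IsSMulRegular.pow`
  obtain ⟨hrs, hr⟩ := (isWeaklyRegular_append_iff M rs [r]).mp
    (isWeaklyRegular_of_perm_of_subset_maximalIdeal h (List.perm_append_singleton r rs).symm hm)
  rw [isWeaklyRegular_singleton_iff] at hr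
  refine isWeaklyRegular_of_perm_of_subset_maximalIdeal
    ((isWeaklyRegular_append_iff M rs [r ^ n]).mpr
      ⟨hrs, (isWeaklyRegular_singleton_iff _ _).mpr (hr.pow n)⟩)
    (List.perm_append_singleton _ rs) fun a ha => ?_
  rcases List.mem_append.mp ha with ha | ha
  · exact hm a (List.mem_cons_of_mem r ha)
  · rw [List.mem_singleton.mp ha]
    exact Ideal.pow_mem_of_mem _ (hm r List.mem_cons_self) n hn

theorem IsLocalRing.isWeaklyRegular_of_forall₂_pow [IsLocalRing R]
    {M : Type*} [AddCommGroup M] [Module R M] [IsNoetherian R M] {rs rs' : List R}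
    (hpow : List.Forall₂ (fun a b => ∃ n, 0 < n ∧ b = a ^ n) rs rs')
    (hm : ∀ a ∈ rs, a ∈ maximalIdeal R) (h : IsWeaklyRegular M rs) :
    IsWeaklyRegular M rs' := by
  induction hpow generalizing M with
  | nil => exact .nil R M
  | @cons r _ rs rs' hr _ ih =>
    obtain ⟨n, hn, rfl⟩ := hr
    obtain ⟨hreg, hrest⟩ := (isWeaklyRegular_cons_iff M _ rs).mp
      (isWeaklyRegular_cons_pow hm h hn)
    exact (isWeaklyRegular_cons_iff M _ rs').mpr
      ⟨hreg, ih (fun a ha => hm a (List.mem_cons_of_mem r ha)) hrest⟩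

theorem Ideal.mem_span_pow_sup_of_pow_mul_mem {I : Ideal R} {a y : R} {l N : ℕ}
    (hlN : l ≤ N) (hreg : IsSMulRegular (R ⧸ I) (a ^ (N - l)))
    (h : a ^ (N - l) * y ∈ Ideal.span {a ^ N} ⊔ I) : y ∈ Ideal.span {a ^ l} ⊔ I := by
  obtain ⟨_, hc, j, hj, hcj⟩ := Submodule.mem_sup.mp h
  obtain ⟨c, rfl⟩ := Ideal.mem_span_singleton'.mp hc
  have hdiff : y - c * a ^ l ∈ I := by
    refine mem_of_isSMulRegular_quotient_of_smul_mem hreg ?_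
    have : a ^ (N - l) * (y - c * a ^ l) = j := by
      rw [mul_sub, ← hcj, mul_left_comm, ← pow_add, Nat.sub_add_cancel hlN]
      ring
    rwa [smul_eq_mul, this]
  rw [← sub_add_cancel y (c * a ^ l), add_comm]
  exact Submodule.add_mem_sup (Ideal.mul_mem_left _ c (Ideal.mem_span_singleton_self _)) hdiff

theorem IsLocalRing.mem_ofList_pow_of_prod_pow_mul_mem [IsLocalRing R] [IsNoetherianRing R]
    {l N : ℕ} (hl : 0 < l) (hlN : l ≤ N) (t : List R) {s : List R}
    (hm : ∀ a ∈ s ++ t, a ∈ maximalIdeal R) (hreg : IsWeaklyRegular R (s ++ t)) {w : R}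
    (h : (t.map (· ^ (N - l))).prod * w ∈
      Ideal.ofList (s.map (· ^ l)) ⊔ Ideal.ofList (t.map (· ^ N))) :
    w ∈ Ideal.ofList (s.map (· ^ l)) ⊔ Ideal.ofList (t.map (· ^ l)) := by
  induction t generalizing s with
  | nil => simpa using h
  | cons r t ih =>
    set J := Ideal.ofList (s.map (· ^ l)) ⊔ Ideal.ofList (t.map (· ^ N))
    have hperm : (s ++ r :: t).Perm (s ++ t ++ [r]) := by
      simpa using (List.perm_append_singleton r t).symm.append_left s
    have hJreg : IsSMulRegular (R ⧸ J) (r ^ (N - l)) := by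
      rcases Nat.eq_zero_or_pos (N - l) with h0 | hpos
      · rw [h0, pow_zero]
        exact .one _
      have hmap (n : ℕ) (hn : 0 < n) (u : List R) :
          List.Forall₂ (fun a b => ∃ n, 0 < n ∧ b = a ^ n) u (u.map (· ^ n)) :=
        List.forall₂_map_right_iff.mpr (List.forall₂_same.mpr fun _ _ => ⟨n, hn, rfl⟩)
      have hpow := List.rel_append (List.rel_append (hmap l hl s) (hmap N (hl.trans_le hlN) t))
        (hmap (N - l) hpos [r])
      obtain ⟨-, hlast⟩ := (isWeaklyRegular_append_iff R _ [r ^ (N - l)]).mp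
        (isWeaklyRegular_of_forall₂_pow hpow (fun a ha => hm a (hperm.mem_iff.mpr ha))
          (isWeaklyRegular_of_perm_of_subset_maximalIdeal hreg hperm hm))
      rwa [isWeaklyRegular_singleton_iff, Ideal.ofList_append, smul_eq_mul, Ideal.mul_top]
        at hlast
    have hstep := Ideal.mem_span_pow_sup_of_pow_mul_mem hlN hJreg
      (y := (t.map (· ^ (N - l))).prod * w) (by simpa [J, mul_assoc, sup_left_comm] using h)
    simpa [sup_assoc] using ih (s := s ++ [r]) (by simpa using hm) (by simpa using hreg)
      (by simpa [J, sup_left_comm, sup_assoc] using hstep)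

theorem Ideal.ofList_ofFn {k : ℕ} (f : Fin k → R) :
    Ideal.ofList (List.ofFn f) = Ideal.span (Set.range f) :=
  congrArg Ideal.span (Set.ext fun a => List.mem_ofFn' f a)

end

/-- If `x 0, …, x (k-1)` is a regular sequence in the maximal ideal of a Noetherian local
ring, `1 ≤ l ≤ N`, and `(∏ᵢ x i ^ (N - l)) · w ∈ (x 0 ^ N, …, x (k-1) ^ N)`, then
`w ∈ (x 0 ^ l, …, x (k-1) ^ l)`. -/
theorem stmt4 {R : Type u} [CommRing R] [IsLocalRing R] [IsNoetherianRing R] (k : ℕ)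
    (x : Fin k → R) (hx : ∀ i, x i ∈ maximalIdeal R)
    (hreg : RingTheory.Sequence.IsRegular R (List.ofFn x))
    (l N : ℕ) (hl : 1 ≤ l) (hlN : l ≤ N) (w : R)
    (h : (∏ i, x i ^ (N - l)) * w ∈ Ideal.span (Set.range fun i => x i ^ N)) :
    w ∈ Ideal.span (Set.range fun i => x i ^ l) := by
  have hm : ∀ a ∈ [] ++ List.ofFn x, a ∈ maximalIdeal R := by
    simpa [List.mem_ofFn] using hx
  simpa [List.map_ofFn, Ideal.ofList_ofFn, List.prod_ofFn, Function.comp_def] using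
    mem_ofList_pow_of_prod_pow_mul_mem hl hlN (List.ofFn x) hm
      (by simpa using hreg.toIsWeaklyRegular) (w := w)
      (by simpa [List.map_ofFn, Ideal.ofList_ofFn, List.prod_ofFn, Function.comp_def] using h)
end

section
/- Let (R,m) be a Noetherian local ring of dimension d and Q an m-primary ideal whose postulation number satisfies η(Q) ≤ 1−d (i.e., λ(R/Q^n) = P(Q,n) for all n > 1−d). Then e_i(Q) = 0 for all 2 ≤ i ≤ d. -/
set_option maxHeartbeats 1000000
set_option synthInstance.maxHeartbeats 1000000

open IsLocalRing Polynomial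

/-- The binomial coefficient `C(a, k)` for an integer `a`. -/
def intChoose (a : ℤ) (k : ℕ) : ℤ :=
  (∏ j ∈ Finset.range k, (a - j)) / (k.factorial : ℤ)

lemma intChoose_eq_zero {a : ℤ} {k : ℕ} (h0 : 0 ≤ a) (h1 : a < k) : intChoose a k = 0 := by
  unfold intChoose
  rw [Finset.prod_eq_zero (i := a.toNat)]
  · simp
  · exact Finset.mem_range.mpr (by omega)
  · simp [Int.toNat_of_nonneg h0]

lemma intChoose_neg_one (k : ℕ) : intChoose (-1) k = (-1) ^ k := by
  unfold intChoose
  have h : ∏ j ∈ Finset.range k, ((-1 : ℤ) - j) = (-1) ^ k * k.factorial := by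
    induction k with
    | zero => simp
    | succ n ih =>
      rw [Finset.prod_range_succ, ih, Nat.factorial_succ]
      push_cast; ring
  rw [h, Int.mul_ediv_cancel _ (by exact_mod_cast k.factorial_ne_zero)]

/-- If `(R,m)` is Noetherian local of dimension `d` and `Q` is `m`-primary with postulation
number `η(Q) ≤ 1 - d`, i.e. `λ(R/Qⁿ) = P(Q,n)` for all integers `n > 1 - d`, then
`e_i(Q) = 0` for `2 ≤ i ≤ d`. -/
theorem stmt11 {R : Type u} [CommRing R] [IsLocalRing R] [IsNoetherianRing R]
    (d : ℕ) (hd : 2 ≤ d) (hdim : ringKrullDim R = d)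
    (Q : Ideal R) (hprim : Q.radical = maximalIdeal R)
    (len : ℕ → ℕ) (e : ℕ → ℤ)
    (hlen : ∀ n : ℕ, moduleLength R (R ⧸ Q ^ n) = ((len n : ℕ∞) : WithBot ℕ∞))
    (hpost : ∀ n : ℤ, 1 - (d : ℤ) < n →
      (len n.toNat : ℤ) = ∑ i ∈ Finset.range (d + 1),
        (-1 : ℤ) ^ i * e i * intChoose (n + d - 1 - i) (d - i)) :
    ∀ i : ℕ, 2 ≤ i → i ≤ d → e i = 0 := by
  -- len 0 = 0
  have hlen0 : len 0 = 0 := by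
    have h := hlen 0
    rw [pow_zero] at h
    have hsub : Subsingleton (R ⧸ (1 : Ideal R)) := by
      rw [Ideal.one_eq_top]
      exact Submodule.Quotient.subsingleton_iff.mpr rfl
    have hsub2 : Subsingleton (Submodule R (R ⧸ (1 : Ideal R))) := by
      constructor
      intro a b
      apply Submodule.ext
      intro x
      have : x = 0 := Subsingleton.elim _ _
      simp [this]
    have hu : Unique (Submodule R (R ⧸ (1 : Ideal R))) :=
      ⟨⟨⊥⟩, fun a => Subsingleton.elim _ _⟩
    have : moduleLength R (R ⧸ (1 : Ideal R)) = 0 := Order.krullDim_eq_zero_of_unique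
    rw [this] at h
    exact_mod_cast h.symm
  have key : ∀ k, ∀ i : ℕ, 2 ≤ i → i ≤ d → d - i = k → e i = 0 := by
    intro k
    induction k using Nat.strong_induction_on with
    | _ k ih =>
      intro i h2 hid hk
      have h := hpost ((i : ℤ) - d) (by omega)
      have htn : ((i : ℤ) - d).toNat = 0 := by omega
      rw [htn, hlen0] at h
      rw [Finset.sum_eq_single i] at h
      · have hic : intChoose ((i : ℤ) - d + d - 1 - i) (d - i) = (-1) ^ (d - i) := by
          have : (i : ℤ) - d + d - 1 - i = -1 := by ring
          rw [this, intChoose_neg_one]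
        rw [hic] at h
        have hne : ((-1 : ℤ) ^ i * (-1) ^ (d - i)) ≠ 0 := by
          simp [pow_ne_zero]
        have := h.symm
        rw [mul_assoc, mul_comm (e i)] at this
        -- this : (-1)^i * ((-1)^(d-i) * e i) = 0
        have h0 : (-1 : ℤ) ^ i * ((-1) ^ (d - i) * e i) = 0 := this
        rcases mul_eq_zero.mp h0 with h' | h'
        · exact absurd h' (pow_ne_zero _ (by norm_num))
        · rcases mul_eq_zero.mp h' with h'' | h''
          · exact absurd h'' (pow_ne_zero _ (by norm_num))
          · exact h''
      · intro j hj hji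
        rcases lt_or_gt_of_ne hji with hlt | hgt
        · -- j < i : intChoose term vanishes
          have : intChoose ((i : ℤ) - d + d - 1 - j) (d - j) = 0 := by
            apply intChoose_eq_zero
            · omega
            · have : j < d := by omega
              push_cast [Nat.cast_sub (le_of_lt this)]
              omega
          rw [this, mul_zero]
        · -- j > i : e j = 0 by induction
          have hjd : j ≤ d := by
            have := Finset.mem_range.mp hj; omega
          have : e j = 0 := ih (d - j) (by omega) j (by omega) hjd rfl
          rw [this]; ring
      · intro hni
        exact absurd (Finset.mem_range.mpr (by omega)) hni
  intro i h2 hid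
  exact key (d - i) i h2 hid rfl
end
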